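/- arXiv:1811.02345 — 8 statements merged into one kernel-verified Lean document; each statement's English description precedes it below -/
import Mathlib

section
/- Let x̄ ∈ K ∩ ℤⁿ and g ∈ ℝⁿ. The infimum of g·x over the set X = {x ∈ K ∩ ℤⁿ : x ⪰ x̄} is finite if and only if g_i ≥ 0 for all i; moreover, when g ≥ 0 the infimum is attained at some point of X. -/
/-- Lexicographic strict order on `Fin n → ℝ` associated with the standard basis. -/
def lexLt {n : ℕ} (x y : Fin n → ℝ) : Prop :=
  ∃ i : Fin n, x i < y i ∧ ∀ j : Fin n, j < i → x j = y j

/-- `x ⪯ y` iff `x ≺ y` or `x = y`. -/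
def lexLe {n : ℕ} (x y : Fin n → ℝ) : Prop := lexLt x y ∨ x = y

/-- Membership in the cone `K = ℝⁿ₊`. -/
def inK {n : ℕ} (x : Fin n → ℝ) : Prop := ∀ i, 0 ≤ x i

/-- `x` is an integer point. -/
def isInt {n : ℕ} (x : Fin n → ℝ) : Prop := ∀ i, ∃ z : ℤ, x i = (z : ℝ)

/-!
If `g i < 0`, raising the `i`-th coordinate of `x̄` by any `m ∈ ℕ` stays in `X` and drives
`g·x` to `-∞`. If `g ≥ 0`, every `x ∈ X` other than `x̄`, with first difference from `x̄` at `k`,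
dominates coordinatewise the point that agrees with `x̄` before `k`, equals `x̄ k + 1` at `k`
(the coordinates are integers) and vanishes after `k`. So `g·x` is minimised over `X` by the
best of these `n` points and `x̄` itself.
-/

open Matrix

section LexFeasible

variable {n : ℕ}

def lexFeasible (xb : Fin n → ℝ) : Set (Fin n → ℝ) :=
  {x | inK x ∧ isInt x ∧ lexLe xb x}

theorem isInt.add {x y : Fin n → ℝ} (hx : isInt x) (hy : isInt y) : isInt (x + y) := by
  intro i
  obtain ⟨a, ha⟩ := hx i
  obtain ⟨b, hb⟩ := hy i
  exact ⟨a + b, by simp [ha, hb]⟩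

theorem isInt_single_natCast (i : Fin n) (m : ℕ) : isInt (Pi.single i (m : ℝ)) := by
  intro j
  by_cases h : j = i
  · subst h
    exact ⟨m, by simp⟩
  · exact ⟨0, by simp [h]⟩

theorem isInt.add_one_le_of_lt {x y : Fin n → ℝ} (hx : isInt x) (hy : isInt y) {i : Fin n}
    (h : x i < y i) : x i + 1 ≤ y i := by
  obtain ⟨a, ha⟩ := hx i
  obtain ⟨b, hb⟩ := hy i
  rw [ha, hb] at h ⊢
  exact_mod_cast Int.add_one_le_of_lt (by exact_mod_cast h)

theorem lexLe_add_single (x : Fin n → ℝ) (i : Fin n) {a : ℝ} (ha : 0 ≤ a) :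
    lexLe x (x + Pi.single i a) := by
  rcases ha.eq_or_lt with rfl | ha
  · exact Or.inr (by simp)
  · refine Or.inl ⟨i, by simpa using ha, fun j hj => ?_⟩
    simp [hj.ne]

theorem add_single_natCast_mem_lexFeasible {xb : Fin n → ℝ} (hK : inK xb) (hI : isInt xb)
    (i : Fin n) (m : ℕ) : xb + Pi.single i (m : ℝ) ∈ lexFeasible xb := by
  have hm : (0 : Fin n → ℝ) ≤ Pi.single i (m : ℝ) := Pi.single_nonneg.mpr m.cast_nonneg
  exact ⟨add_nonneg (show 0 ≤ xb from hK) hm, hI.add (isInt_single_natCast i m),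
    lexLe_add_single xb i m.cast_nonneg⟩

theorem not_bddBelow_dotProduct_image_lexFeasible {xb g : Fin n → ℝ} (hK : inK xb)
    (hI : isInt xb) {i : Fin n} (hgi : g i < 0) :
    ¬ BddBelow ((g ⬝ᵥ ·) '' lexFeasible xb) := by
  rintro ⟨c, hc⟩
  obtain ⟨m, hm⟩ := exists_nat_gt ((g ⬝ᵥ xb - c) / -g i)
  have hlow : c ≤ g ⬝ᵥ xb + g i * m := by
    simpa [dotProduct_add, dotProduct_single] using
      hc ⟨_, add_single_natCast_mem_lexFeasible hK hI i m, rfl⟩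
  have : g ⬝ᵥ xb - c < m * -g i := (div_lt_iff₀ (neg_pos.mpr hgi)).mp hm
  linarith

def lexStep (xb : Fin n → ℝ) (k : Fin n) : Fin n → ℝ :=
  fun j => if j < k then xb j else if j = k then xb k + 1 else 0

theorem lexStep_mem_lexFeasible {xb : Fin n → ℝ} (hK : inK xb) (hI : isInt xb) (k : Fin n) :
    lexStep xb k ∈ lexFeasible xb := by
  refine ⟨fun j => ?_, fun j => ?_,
    Or.inl ⟨k, by simp [lexStep], fun j hj => by simp [lexStep, hj]⟩⟩
  · unfold lexStep
    split_ifs with h₁ h₂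
    · exact hK j
    · linarith [hK k]
    · exact le_rfl
  · obtain ⟨z, hz⟩ := hI j
    unfold lexStep
    split_ifs with h₁ h₂
    · exact ⟨z, hz⟩
    · subst h₂
      exact ⟨z + 1, by simp [hz]⟩
    · exact ⟨0, by simp⟩

theorem lexStep_le {xb y : Fin n → ℝ} (hI : isInt xb) (hyK : inK y) (hyI : isInt y) {k : Fin n}
    (hk : xb k < y k) (hpre : ∀ j < k, xb j = y j) : lexStep xb k ≤ y := by
  intro j
  unfold lexStep
  split_ifs with h₁ h₂
  · exact (hpre j h₁).le
  · subst h₂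
    exact hI.add_one_le_of_lt hyI hk
  · exact hyK j

theorem exists_le_of_mem_lexFeasible {xb y : Fin n → ℝ} (hI : isInt xb)
    (hy : y ∈ lexFeasible xb) : ∃ c ∈ insert xb (Set.range (lexStep xb)), c ≤ y := by
  obtain ⟨hyK, hyI, ⟨k, hk, hpre⟩ | rfl⟩ := hy
  · exact ⟨lexStep xb k, Set.mem_insert_of_mem _ ⟨k, rfl⟩, lexStep_le hI hyK hyI hk hpre⟩
  · exact ⟨xb, Set.mem_insert _ _, le_rfl⟩

theorem exists_forall_dotProduct_le_of_nonneg {xb g : Fin n → ℝ} (hK : inK xb) (hI : isInt xb)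
    (hg : 0 ≤ g) : ∃ x ∈ lexFeasible xb, ∀ y ∈ lexFeasible xb, g ⬝ᵥ x ≤ g ⬝ᵥ y := by
  have hcand : insert xb (Set.range (lexStep xb)) ⊆ lexFeasible xb := by
    rintro _ (rfl | ⟨k, rfl⟩)
    · exact ⟨hK, hI, Or.inr rfl⟩
    · exact lexStep_mem_lexFeasible hK hI k
  obtain ⟨x, hx, hmin⟩ := Set.exists_min_image (insert xb (Set.range (lexStep xb))) (g ⬝ᵥ ·)
    ((Set.finite_range _).insert xb) (Set.insert_nonempty _ _)
  refine ⟨x, hcand hx, fun y hy => ?_⟩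
  obtain ⟨c, hc, hcy⟩ := exists_le_of_mem_lexFeasible hI hy
  exact (hmin c hc).trans (dotProduct_le_dotProduct_of_nonneg_left hcy hg)

end LexFeasible

/-- For `x̄ ∈ K ∩ ℤⁿ` and `g ∈ ℝⁿ`, the infimum of `g·x` over
`X = {x ∈ K ∩ ℤⁿ : x ⪰ x̄}` is finite (i.e. the set of values is bounded below,
`X` being nonempty) iff `g ≥ 0`; and when `g ≥ 0` the infimum is attained on `X`. -/
theorem stmt1 {n : ℕ} (xb : Fin n → ℝ) (hK : inK xb) (hI : isInt xb) (g : Fin n → ℝ) :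
    (BddBelow {t : ℝ | ∃ x : Fin n → ℝ,
        (inK x ∧ isInt x ∧ lexLe xb x) ∧ ∑ i, g i * x i = t} ↔ ∀ i, 0 ≤ g i) ∧
    ((∀ i, 0 ≤ g i) → ∃ x : Fin n → ℝ, (inK x ∧ isInt x ∧ lexLe xb x) ∧
      ∀ y : Fin n → ℝ, (inK y ∧ isInt y ∧ lexLe xb y) →
        ∑ i, g i * x i ≤ ∑ i, g i * y i) := by
  have hmin : 0 ≤ g → ∃ x ∈ lexFeasible xb, ∀ y ∈ lexFeasible xb, g ⬝ᵥ x ≤ g ⬝ᵥ y :=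
    exists_forall_dotProduct_le_of_nonneg hK hI
  change (BddBelow ((g ⬝ᵥ ·) '' lexFeasible xb) ↔ 0 ≤ g) ∧ _
  refine ⟨⟨fun hbdd i => ?_, fun hg => ?_⟩, hmin⟩
  · by_contra! hgi
    exact not_bddBelow_dotProduct_image_lexFeasible hK hI hgi hbdd
  · obtain ⟨x, -, hx⟩ := hmin hg
    exact ⟨g ⬝ᵥ x, Set.forall_mem_image.mpr hx⟩
end

section
/- For every x̄ ∈ K ∩ ℤⁿ, the recession cone of Q(x̄) equals K; that is, for d ∈ ℝⁿ one has (x + t·d ∈ Q(x̄) for every x ∈ Q(x̄) and every t ≥ 0) if and only if d_i ≥ 0 for all i. -/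
/-- `Q(x̄) = conv {x ∈ K ∩ ℤⁿ : x ⪰ x̄}`. -/
def Q {n : ℕ} (xb : Fin n → ℝ) : Set (Fin n → ℝ) :=
  convexHull ℝ {x | inK x ∧ isInt x ∧ lexLe xb x}

open Set
open scoped Pointwise

lemma lexLe_trans {n : ℕ} {x y z : Fin n → ℝ} (hxy : lexLe x y) (hyz : lexLe y z) :
    lexLe x z := by
  rcases hxy with ⟨i, hi, hxy⟩ | rfl
  · rcases hyz with ⟨k, hk, hyz⟩ | rfl
    · left
      rcases lt_trichotomy i k with hik | rfl | hki
      · exact ⟨i, hyz i hik ▸ hi, fun j hj => (hxy j hj).trans (hyz j (hj.trans hik))⟩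
      · exact ⟨i, hi.trans hk, fun j hj => (hxy j hj).trans (hyz j hj)⟩
      · exact ⟨k, hxy k hki ▸ hk, fun j hj => (hxy j (hj.trans hki)).trans (hyz j hj)⟩
    · exact Or.inl ⟨i, hi, hxy⟩
  · exact hyz

lemma lexLe_self_add {n : ℕ} (v : Fin n → ℝ) {w : Fin n → ℝ} (hw : inK w) :
    lexLe v (v + w) := by
  by_cases hw0 : w = 0
  · exact Or.inr (by simp [hw0])
  obtain ⟨i, hi, hmin⟩ := wellFounded_lt.has_min {i | w i ≠ 0}
    (Function.ne_iff.mp hw0)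
  refine Or.inl ⟨i, ?_, fun j hj => ?_⟩
  · simpa using lt_of_le_of_ne (hw i) (Ne.symm hi)
  · have hwj : w j = 0 := not_not.mp fun hj' => hmin j hj' hj
    simp [hwj]

lemma inK_iff_nonneg {n : ℕ} (x : Fin n → ℝ) : inK x ↔ 0 ≤ x := Pi.le_def.symm

lemma Q_subset_Ici {n : ℕ} (xb : Fin n → ℝ) : Q xb ⊆ Ici 0 :=
  convexHull_min (fun _ hx => (inK_iff_nonneg _).mp hx.1) (convex_Ici 0)

lemma mem_convexHull_inK_isInt {n : ℕ} {w : Fin n → ℝ} (hw : inK w) :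
    w ∈ convexHull ℝ {z : Fin n → ℝ | inK z ∧ isInt z} := by
  let box : Fin n → Set ℝ := fun i => {(⌊w i⌋₊ : ℝ), (⌊w i⌋₊ : ℝ) + 1}
  have hw_box : w ∈ convexHull ℝ (univ.pi box) := by
    refine mem_convexHull_pi fun i _ => ?_
    rw [convexHull_pair, segment_eq_Icc (by linarith)]
    exact ⟨Nat.floor_le (hw i), (Nat.lt_floor_add_one (w i)).le⟩
  refine convexHull_mono (fun z hz => show inK z ∧ isInt z from ⟨fun i => ?_, fun i => ?_⟩)
    hw_box
  · rcases hz i (mem_univ i) with h | h <;> rw [h] <;> positivity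
  · rcases hz i (mem_univ i) with h | h
    · exact ⟨(⌊w i⌋₊ : ℤ), by rw [h]; push_cast; rfl⟩
    · exact ⟨(⌊w i⌋₊ + 1 : ℤ), by rw [mem_singleton_iff.mp h]; push_cast; rfl⟩

lemma add_mem_Q {n : ℕ} {xb x w : Fin n → ℝ} (hx : x ∈ Q xb) (hw : inK w) :
    x + w ∈ Q xb := by
  have hgen : {x | inK x ∧ isInt x ∧ lexLe xb x} + {z : Fin n → ℝ | inK z ∧ isInt z} ⊆
      {x | inK x ∧ isInt x ∧ lexLe xb x} := by
    rintro _ ⟨v, ⟨hvK, hvI, hv⟩, z, ⟨hzK, hzI⟩, rfl⟩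
    refine ⟨fun i => add_nonneg (hvK i) (hzK i), fun i => ?_,
      lexLe_trans hv (lexLe_self_add v hzK)⟩
    obtain ⟨a, ha⟩ := hvI i
    obtain ⟨b, hb⟩ := hzI i
    exact ⟨a + b, by simp [ha, hb]⟩
  have hsum := add_mem_add hx (mem_convexHull_inK_isInt hw)
  rw [Q, ← convexHull_add] at hsum
  exact convexHull_mono hgen hsum

lemma nonneg_of_forall_nonneg_add_mul {a b : ℝ} (h : ∀ t : ℝ, 0 ≤ t → 0 ≤ a + t * b) :
    0 ≤ b := by
  by_contra! hb
  have := h ((|a| + 1) / -b) (div_nonneg (by positivity) (by linarith))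
  rw [div_mul_eq_mul_div, div_neg, mul_div_cancel_right₀ _ hb.ne] at this
  linarith [le_abs_self a]

/-- For `x̄ ∈ K ∩ ℤⁿ`, the recession cone of `Q(x̄)` equals `K`: a direction `d`
satisfies `x + t•d ∈ Q(x̄)` for all `x ∈ Q(x̄)` and all `t ≥ 0` iff `d ≥ 0`. -/
theorem stmt2 {n : ℕ} (xb : Fin n → ℝ) (hK : inK xb) (hI : isInt xb) (d : Fin n → ℝ) :
    (∀ x ∈ Q xb, ∀ t : ℝ, 0 ≤ t → x + t • d ∈ Q xb) ↔ ∀ i, 0 ≤ d i := by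
  constructor
  · intro hrec i
    have hxb : xb ∈ Q xb := subset_convexHull ℝ _ ⟨hK, hI, Or.inr rfl⟩
    exact nonneg_of_forall_nonneg_add_mul fun t ht =>
      Q_subset_Ici xb (hrec xb hxb t ht) i
  · intro hd x hx t ht
    exact add_mem_Q hx fun i => mul_nonneg ht (hd i)
end

section
/- Let x̄ ∈ K ∩ ℤⁿ. For every k ∈ {1,…,n}, the k-th lex-cut associated with x̄ is satisfied by every point of Q(x̄); in particular, for every x ∈ K ∩ ℤⁿ with x ⪰ x̄ one has ∑_{i=1}^k d^k_i x_i ≥ ∑_{i=1}^k d^k_i x̄_i. -/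
/-- The coefficients `d^k_i` of the `k`-th lex-cut associated with `x̄`:
`d^k_k = 1`, `d^k_{k-1} = x̄_k`, and `d^k_i = x̄_k ∏_{j=i+1}^{k-1} (x̄_j + 1)` for `i ≤ k-2`. -/
noncomputable def dcoef {n : ℕ} (xb : Fin n → ℝ) (k i : Fin n) : ℝ :=
  if i = k then 1 else xb k * ∏ j ∈ Finset.Ioo i k, (xb j + 1)

/-! If `x ≻ x̄` and the two first differ at `i₀ ≤ k`, integrality gives `x_{i₀} ≥ x̄_{i₀} + 1`, so the
cut gains at least `d^k_{i₀}` at coordinate `i₀`. The coefficients are chosen so that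
`∑_{i₀ < i ≤ k} d^k_i x̄_i = d^k_{i₀}` (the product `∏ (x̄_j + 1)` telescopes), which bounds what the
nonnegative later coordinates can lose. The cut is a half-space, so it passes from the integer
points to their convex hull `Q(x̄)`. -/

open Finset

theorem Finset.prod_add_one_eq_one_add_sum_mul_prod_gt {ι R : Type*} [LinearOrder ι]
    [CommSemiring R] (s : Finset ι) (a : ι → R) :
    ∏ j ∈ s, (a j + 1) = 1 + ∑ i ∈ s, a i * ∏ j ∈ s with i < j, (a j + 1) := by
  simp only [add_comm _ (1 : R)]
  exact prod_one_add_ordered (ι := ιᵒᵈ) s a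

theorem Finset.sum_Iic_eq_sum_Iio_add_add_sum_Ioc {α M : Type*} [LinearOrder α]
    [LocallyFiniteOrder α] [LocallyFiniteOrderBot α] [AddCommMonoid M] (f : α → M) {a b : α}
    (h : a ≤ b) : ∑ i ∈ Iic b, f i = ∑ i ∈ Iio a, f i + f a + ∑ i ∈ Ioc a b, f i := by
  rw [← Iic_union_Ioc_eq_Iic h, sum_union (Iic_disjoint_Ioc le_rfl), Iic_eq_cons_Iio, sum_cons,
    add_comm (f a)]

theorem isLinearMap_sum_mul {ι R : Type*} [CommSemiring R] (s : Finset ι) (c : ι → R) :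
    IsLinearMap R fun y : ι → R => ∑ i ∈ s, c i * y i :=
  ⟨fun y z => by simp only [Pi.add_apply, mul_add, sum_add_distrib],
    fun r y => by simp only [Pi.smul_apply, smul_eq_mul, mul_sum, mul_left_comm]⟩

theorem Int.cast_add_one_le_of_cast_lt {R : Type*} [Ring R] [LinearOrder R] [IsStrictOrderedRing R]
    {a b : ℤ} (h : (a : R) < b) : (a : R) + 1 ≤ b := by
  exact_mod_cast Int.add_one_le_of_lt (by exact_mod_cast h)

section LexCut

variable {n : ℕ} (xb : Fin n → ℝ)

theorem dcoef_self (k : Fin n) : dcoef xb k k = 1 := if_pos rfl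

theorem dcoef_of_ne {k i : Fin n} (h : i ≠ k) :
    dcoef xb k i = xb k * ∏ j ∈ Ioo i k, (xb j + 1) := if_neg h

variable {xb}

theorem dcoef_nonneg (hK : inK xb) (k i : Fin n) : 0 ≤ dcoef xb k i := by
  unfold dcoef
  split_ifs
  · exact zero_le_one
  · exact mul_nonneg (hK k) (prod_nonneg fun j _ => by linarith [hK j])

theorem sum_Ioc_dcoef_mul_self {i₀ k : Fin n} (h : i₀ < k) :
    ∑ i ∈ Ioc i₀ k, dcoef xb k i * xb i = dcoef xb k i₀ := by
  have hIoo : ∀ i ∈ Ioo i₀ k, {j ∈ Ioo i₀ k | i < j} = Ioo i k := fun i hi => by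
    ext j
    simp only [mem_filter, mem_Ioo] at hi ⊢
    constructor
    · rintro ⟨⟨-, hjk⟩, hij⟩
      exact ⟨hij, hjk⟩
    · rintro ⟨hij, hjk⟩
      exact ⟨⟨hi.1.trans hij, hjk⟩, hij⟩
  rw [← Ioo_insert_right h, sum_insert right_notMem_Ioo, dcoef_self, dcoef_of_ne xb h.ne,
    prod_add_one_eq_one_add_sum_mul_prod_gt, mul_add, mul_one, mul_sum, one_mul]
  congr 1
  refine sum_congr rfl fun i hi => ?_
  rw [dcoef_of_ne xb (mem_Ioo.1 hi).2.ne, hIoo i hi]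
  ring

theorem sum_Ioc_dcoef_mul_self_le {i₀ k : Fin n} (h : i₀ ≤ k) :
    ∑ i ∈ Ioc i₀ k, dcoef xb k i * xb i ≤ dcoef xb k i₀ := by
  rcases h.lt_or_eq with h | rfl
  · exact (sum_Ioc_dcoef_mul_self h).le
  · simp [dcoef_self]

theorem lexCut_of_lexLe (hK : inK xb) (hI : isInt xb) (k : Fin n) {x : Fin n → ℝ}
    (hxK : inK x) (hxI : isInt x) (hle : lexLe xb x) :
    ∑ i ∈ Iic k, dcoef xb k i * xb i ≤ ∑ i ∈ Iic k, dcoef xb k i * x i := by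
  obtain rfl | ⟨i₀, hlt, heq⟩ := hle.symm
  · exact le_rfl
  rcases lt_or_ge k i₀ with hk | hk
  · exact (sum_congr rfl fun i hi => by rw [heq i ((mem_Iic.1 hi).trans_lt hk)]).le
  have hstep : xb i₀ + 1 ≤ x i₀ := by
    obtain ⟨a, ha⟩ := hI i₀
    obtain ⟨b, hb⟩ := hxI i₀
    rw [ha, hb] at hlt ⊢
    exact Int.cast_add_one_le_of_cast_lt hlt
  have hbelow : ∑ i ∈ Iio i₀, dcoef xb k i * x i = ∑ i ∈ Iio i₀, dcoef xb k i * xb i :=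
    sum_congr rfl fun i hi => by rw [heq i (mem_Iio.1 hi)]
  have htail : 0 ≤ ∑ i ∈ Ioc i₀ k, dcoef xb k i * x i :=
    sum_nonneg fun i _ => mul_nonneg (dcoef_nonneg hK k i) (hxK i)
  have hhead : dcoef xb k i₀ * (xb i₀ + 1) ≤ dcoef xb k i₀ * x i₀ :=
    mul_le_mul_of_nonneg_left hstep (dcoef_nonneg hK k i₀)
  rw [sum_Iic_eq_sum_Iio_add_add_sum_Ioc _ hk, sum_Iic_eq_sum_Iio_add_add_sum_Ioc _ hk, hbelow]
  linarith [sum_Ioc_dcoef_mul_self_le (xb := xb) hk]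

end LexCut

/-- For `x̄ ∈ K ∩ ℤⁿ` and every `k`, the `k`-th lex-cut associated with `x̄` is satisfied
by every point of `Q(x̄)`; in particular by every `x ∈ K ∩ ℤⁿ` with `x ⪰ x̄`. -/
theorem stmt5 {n : ℕ} (xb : Fin n → ℝ) (hK : inK xb) (hI : isInt xb) (k : Fin n) :
    (∀ x ∈ Q xb,
      ∑ i ∈ Finset.Iic k, dcoef xb k i * x i ≥ ∑ i ∈ Finset.Iic k, dcoef xb k i * xb i) ∧
    (∀ x : Fin n → ℝ, inK x → isInt x → lexLe xb x →
      ∑ i ∈ Finset.Iic k, dcoef xb k i * x i ≥ ∑ i ∈ Finset.Iic k, dcoef xb k i * xb i) := by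
  have hcut : {x | inK x ∧ isInt x ∧ lexLe xb x} ⊆
      {x | ∑ i ∈ Iic k, dcoef xb k i * xb i ≤ ∑ i ∈ Iic k, dcoef xb k i * x i} :=
    fun x ⟨hxK, hxI, hle⟩ => lexCut_of_lexLe hK hI k hxK hxI hle
  exact ⟨fun x hx => convexHull_min hcut (convex_halfSpace_ge (isLinearMap_sum_mul _ _) _) hx,
    fun x hxK hxI hle => hcut ⟨hxK, hxI, hle⟩⟩
end

section
/- Let x̄ ∈ K ∩ ℤⁿ and let 1 ≤ k ≤ n. The image of Q(x̄) under the orthogonal projection ℝⁿ → ℝᵏ onto the first k coordinates equals Q(x̄_{[k]}), where x̄_{[k]} := (x̄₁,…,x̄_k) ∈ ℝᵏ and Q(x̄_{[k]}) is the convex hull in ℝᵏ of {y ∈ ℤᵏ : y_i ≥ 0 for all i, y ⪰ x̄_{[k]}} with ⪯ the lexicographic order on ℝᵏ. -/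
def lexUpperLatticePoints {n : ℕ} (xb : Fin n → ℝ) : Set (Fin n → ℝ) :=
  {x | inK x ∧ isInt x ∧ lexLe xb x}

theorem Q_eq_convexHull_lexUpperLatticePoints {n : ℕ} (xb : Fin n → ℝ) :
    Q xb = convexHull ℝ (lexUpperLatticePoints xb) := rfl

section Truncation

variable {m n : ℕ} (h : m ≤ n)

theorem lexLe_comp_castLE {x y : Fin n → ℝ} (hxy : lexLe x y) :
    lexLe (x ∘ Fin.castLE h) (y ∘ Fin.castLE h) := by
  rcases hxy with ⟨i, hlt, heq⟩ | rfl
  · by_cases hi : (i : ℕ) < m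
    · exact .inl ⟨⟨i, hi⟩, hlt, fun j hj => heq _ hj⟩
    · exact .inr <| funext fun j => heq _ (Fin.lt_def.2 (j.isLt.trans_le (not_lt.1 hi)))
  · exact .inr rfl

theorem lexLt_of_lexLt_comp_castLE {x y : Fin n → ℝ}
    (hxy : lexLt (x ∘ Fin.castLE h) (y ∘ Fin.castLE h)) : lexLt x y := by
  obtain ⟨i, hlt, heq⟩ := hxy
  refine ⟨Fin.castLE h i, hlt, fun j hj => ?_⟩
  have hjm : (j : ℕ) < m := (Fin.lt_def.1 hj).trans i.isLt
  exact heq ⟨j, hjm⟩ hj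

theorem forall_extend_castLE {p : ℝ → Prop} (h0 : p 0) {y : Fin m → ℝ} (hy : ∀ i, p (y i))
    (j : Fin n) : p (Function.extend (Fin.castLE h) y 0 j) := by
  by_cases hj : ∃ i, Fin.castLE h i = j
  · obtain ⟨i, rfl⟩ := hj
    rw [(Fin.castLE_injective h).extend_apply]
    exact hy i
  · rw [Function.extend_apply' _ _ _ hj]
    exact h0

theorem image_comp_castLE_lexUpperLatticePoints {xb : Fin n → ℝ} (hK : inK xb)
    (hI : isInt xb) :
    (· ∘ Fin.castLE h) '' lexUpperLatticePoints xb
      = lexUpperLatticePoints (xb ∘ Fin.castLE h) := by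
  ext y
  constructor
  · rintro ⟨x, ⟨hxK, hxI, hxL⟩, rfl⟩
    exact ⟨fun i => hxK _, fun i => hxI _, lexLe_comp_castLE h hxL⟩
  · rintro ⟨hyK, hyI, hyL | rfl⟩
    · have hcomp : Function.extend (Fin.castLE h) y 0 ∘ Fin.castLE h = y :=
        Function.extend_comp (Fin.castLE_injective h) _ _
      refine ⟨Function.extend (Fin.castLE h) y 0,
        ⟨forall_extend_castLE h le_rfl hyK, forall_extend_castLE h (p := fun t => ∃ z : ℤ, t = z) ⟨0, by simp⟩ hyI,
          .inl (lexLt_of_lexLt_comp_castLE h ?_)⟩, hcomp⟩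
      rwa [hcomp]
    · exact ⟨xb, ⟨hK, hI, .inr rfl⟩, rfl⟩

end Truncation

theorem stmt7_general {n k : ℕ} (hkn : k ≤ n)
    (xb : Fin n → ℝ) (hK : inK xb) (hI : isInt xb) :
    (fun x : Fin n → ℝ => fun i : Fin k => x (Fin.castLE hkn i)) '' Q xb
      = Q (fun i : Fin k => xb (Fin.castLE hkn i)) := by
  have hproj : (fun x : Fin n → ℝ => fun i : Fin k => x (Fin.castLE hkn i))
      = LinearMap.funLeft ℝ ℝ (Fin.castLE hkn) := rfl
  rw [hproj, Q_eq_convexHull_lexUpperLatticePoints, LinearMap.image_convexHull]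
  exact congrArg _ (image_comp_castLE_lexUpperLatticePoints hkn hK hI)

/-- For `x̄ ∈ K ∩ ℤⁿ` and `1 ≤ k ≤ n`, the image of `Q(x̄)` under the orthogonal
projection onto the first `k` coordinates equals `Q(x̄_{[k]})`, where
`x̄_{[k]} = (x̄₁, …, x̄ₖ) ∈ ℝᵏ`. -/
theorem stmt7 {n k : ℕ} (hk1 : 1 ≤ k) (hkn : k ≤ n)
    (xb : Fin n → ℝ) (hK : inK xb) (hI : isInt xb) :
    (fun x : Fin n → ℝ => fun i : Fin k => x (Fin.castLE hkn i)) '' Q xb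
      = Q (fun i : Fin k => xb (Fin.castLE hkn i)) :=
  stmt7_general hkn xb hK hI
end

section
/- Let c¹,…,cⁿ be a lattice basis of ℤⁿ and let x̄ ∈ K_C ∩ ℤⁿ with x̄ ≠ 0. Then Q_C(x̄) = {x ∈ ℝⁿ : c^i·x ≥ 0 for i = 1,…,n, and ∑_{i=1}^k d^k_i (c^i·x) ≥ ∑_{i=1}^k d^k_i (c^i·x̄) for k = 1,…,n}. -/
/-- Dot product of an integer vector with a real vector. -/
def rdot {n : ℕ} (c : Fin n → ℤ) (x : Fin n → ℝ) : ℝ := ∑ j, (c j : ℝ) * x j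

/-- Lexicographic strict order associated with the lattice basis given by the rows of `C`. -/
def lexLtC {n : ℕ} (C : Matrix (Fin n) (Fin n) ℤ) (x y : Fin n → ℝ) : Prop :=
  ∃ i : Fin n, rdot (C i) x < rdot (C i) y ∧ ∀ j : Fin n, j < i → rdot (C j) x = rdot (C j) y

/-- `x ⪯_C y` iff `x ≺_C y` or `x = y`. -/
def lexLeC {n : ℕ} (C : Matrix (Fin n) (Fin n) ℤ) (x y : Fin n → ℝ) : Prop :=
  lexLtC C x y ∨ x = y

/-- `Q_C(x̄) = conv {x ∈ K_C ∩ ℤⁿ : x ⪰_C x̄}`. -/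
def QC {n : ℕ} (C : Matrix (Fin n) (Fin n) ℤ) (xb : Fin n → ℝ) : Set (Fin n → ℝ) :=
  convexHull ℝ {x | (∀ i, 0 ≤ rdot (C i) x) ∧ isInt x ∧ lexLeC C xb x}

/-- The lex-cut coefficients for a general lattice basis:
`d^k_k = 1`, `d^k_{k-1} = cᵏ·x̄`, and `d^k_i = (cᵏ·x̄)·∏_{j=i+1}^{k-1}(cʲ·x̄ + 1)`
for `i ≤ k-2`. -/
noncomputable def dcoefC {n : ℕ} (C : Matrix (Fin n) (Fin n) ℤ) (xb : Fin n → ℝ)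
    (k i : Fin n) : ℝ :=
  if i = k then 1 else rdot (C k) xb * ∏ j ∈ Finset.Ioo i k, (rdot (C j) xb + 1)

/-!
In the coordinates `y = C x`, which preserve integrality because `C` is unimodular, `K_C` is the
nonnegative orthant and `≺_C` the ordinary lexicographic order. There the right-hand side of the
`k`-th cut telescopes to `ȳ_k ∏_{j<k} (ȳ_j + 1)`, which is the coefficient of `y_0` in the cut of
index `k + 1`; with `S` this value for the tail `ȳ'`, that cut reads
`S y_0 + (k-th cut of y' for ȳ') ≥ S ȳ_0 + S`. Both inclusions then go by induction on `n`.
Validity: a lexicographically larger integer point has `y_0 ≥ ȳ_0 + 1`, or `y_0 = ȳ_0` and a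
lexicographically larger tail. Sufficiency: if `y_0 ≥ ȳ_0 + 1`, `y` lies in the hull of the integer
points of a translated orthant; otherwise, with `t = ȳ_0 + 1 - y_0 > 0`,
`y = t • (ȳ_0, y' / t) + (y_0 - ȳ_0) • (ȳ_0 + 1, 0)` and `y' / t` satisfies the cuts for `ȳ'`.
-/

open Finset

variable {n : ℕ}

lemma LinearEquiv.convexHull_preimage {𝕜 E F : Type*} [Semiring 𝕜] [PartialOrder 𝕜]
    [AddCommMonoid E] [Module 𝕜 E] [AddCommMonoid F] [Module 𝕜 F] (e : E ≃ₗ[𝕜] F) (s : Set F) :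
    convexHull 𝕜 (e ⁻¹' s) = e ⁻¹' convexHull 𝕜 s := by
  rw [← e.image_symm_eq_preimage, ← e.image_symm_eq_preimage]
  exact (e.symm.toLinearMap.image_convexHull s).symm

lemma image_cons_convexHull {𝕜 E : Type*} [Field 𝕜] [LinearOrder 𝕜] [IsStrictOrderedRing 𝕜]
    [AddCommGroup E] [Module 𝕜 E] (a : E) (s : Set (Fin n → E)) :
    (Fin.cons a '' convexHull 𝕜 s : Set (Fin (n + 1) → E)) = convexHull 𝕜 (Fin.cons a '' s) := by
  have hcons : ∀ t : Set (Fin n → E), (Fin.cons a '' t : Set (Fin (n + 1) → E)) =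
      Fin.consLinearEquiv 𝕜 (fun _ => E) '' ({a} ×ˢ t) := by
    intro t; rw [Set.singleton_prod, Set.image_image]; rfl
  rw [hcons, hcons, ← LinearEquiv.coe_coe, ← LinearMap.image_convexHull, convexHull_prod,
    convexHull_singleton]

lemma convexHull_intCast_Ici {𝕜 : Type*} [Field 𝕜] [LinearOrder 𝕜] [IsStrictOrderedRing 𝕜]
    [FloorRing 𝕜] (m : ℤ) :
    convexHull 𝕜 ((Int.cast : ℤ → 𝕜) '' Set.Ici m) = Set.Ici (m : 𝕜) := by
  refine (convexHull_min ?_ (convex_Ici _)).antisymm fun y hy => ?_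
  · rintro _ ⟨z, hz, rfl⟩
    exact Set.mem_Ici.mpr (Int.cast_le.mpr hz)
  have hm : m ≤ ⌊y⌋ := Int.le_floor.mpr (Set.mem_Ici.mp hy)
  have hseg : y ∈ segment 𝕜 ((⌊y⌋ : ℤ) : 𝕜) ((⌊y⌋ + 1 : ℤ) : 𝕜) := by
    rw [segment_eq_Icc (by push_cast; linarith)]
    exact ⟨Int.floor_le y, by push_cast; exact (Int.lt_floor_add_one y).le⟩
  rw [← convexHull_pair] at hseg
  refine convexHull_mono (Set.pair_subset ?_ ?_) hseg
  · exact Set.mem_image_of_mem _ (Set.mem_Ici.mpr hm)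
  · exact Set.mem_image_of_mem _ (Set.mem_Ici.mpr (by linarith))

lemma Fin.sum_Iic_succ {M : Type*} [AddCommMonoid M] (f : Fin (n + 1) → M) (k : Fin n) :
    ∑ i ∈ Iic k.succ, f i = f 0 + ∑ i ∈ Iic k, f i.succ := by
  rw [Iic_eq_Icc, ← Ioc_insert_left bot_le, sum_insert left_notMem_Ioc, bot_eq_zero,
    ← Fin.map_succEmb_Iic, sum_map]
  rfl

lemma Fin.cons_nonneg_iff {α : Type*} [Preorder α] [Zero α] {a : α} {y : Fin n → α} :
    0 ≤ (Fin.cons a y : Fin (n + 1) → α) ↔ 0 ≤ a ∧ 0 ≤ y :=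
  Fin.le_cons

lemma toLex_cons_le_toLex_cons {α : Type*} [PartialOrder α] {a b : α} {x y : Fin n → α} :
    toLex (Fin.cons a x : Fin (n + 1) → α) ≤ toLex (Fin.cons b y) ↔
      a < b ∨ a = b ∧ toLex x ≤ toLex y := by
  have hlt : toLex (Fin.cons a x : Fin (n + 1) → α) < toLex (Fin.cons b y) ↔
      a < b ∨ a = b ∧ toLex x < toLex y :=
    Fin.pi_lex_lt_cons_cons (· < ·)
  simp only [le_iff_lt_or_eq, toLex_inj, Fin.cons_inj]
  refine (or_congr_left hlt).trans ?_
  tauto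

lemma isInt_cons {a : ℝ} {y : Fin n → ℝ} :
    isInt (Fin.cons a y : Fin (n + 1) → ℝ) ↔ (∃ z : ℤ, a = z) ∧ isInt y := by
  simp [isInt, Fin.forall_fin_succ]

lemma isInt_mulVec (M : Matrix (Fin n) (Fin n) ℤ) {x : Fin n → ℝ} (hx : isInt x) :
    isInt ((Int.castRingHom ℝ).mapMatrix M |>.mulVec x) := by
  choose z hz using hx
  exact fun i => ⟨∑ j, M i j * z j, by simp [Matrix.mulVec, dotProduct, hz]⟩

/-- The data of the lex-cuts in the coordinates `y = C x`: `dcoefC C x̄ = lexCutCoef (C x̄)`, and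
`lexCut ȳ y k` is the left-hand side of the `k`-th cut at `y`. -/
noncomputable def lexCutCoef (yb : Fin n → ℝ) (k i : Fin n) : ℝ :=
  if i = k then 1 else yb k * ∏ j ∈ Ioo i k, (yb j + 1)

noncomputable def lexCut (yb y : Fin n → ℝ) (k : Fin n) : ℝ :=
  ∑ i ∈ Iic k, lexCutCoef yb k i * y i

def lexCutPolyhedron (yb : Fin n → ℝ) : Set (Fin n → ℝ) :=
  {y | 0 ≤ y ∧ ∀ k, lexCut yb yb k ≤ lexCut yb y k}

def lexIntPoints (yb : Fin n → ℝ) : Set (Fin n → ℝ) :=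
  {z | 0 ≤ z ∧ isInt z ∧ toLex yb ≤ toLex z}

lemma lexCutCoef_nonneg {yb : Fin n → ℝ} (hyb : 0 ≤ yb) (k i : Fin n) :
    0 ≤ lexCutCoef yb k i := by
  unfold lexCutCoef
  split_ifs
  · exact zero_le_one
  · exact mul_nonneg (hyb k) (prod_nonneg fun j _ => add_nonneg (hyb j) zero_le_one)

lemma lexCut_nonneg {yb y : Fin n → ℝ} (hyb : 0 ≤ yb) (hy : 0 ≤ y) (k : Fin n) :
    0 ≤ lexCut yb y k :=
  sum_nonneg fun i _ => mul_nonneg (lexCutCoef_nonneg hyb k i) (hy i)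

lemma isLinearMap_lexCut (yb : Fin n → ℝ) (k : Fin n) :
    IsLinearMap ℝ fun y => lexCut yb y k where
  map_add x y := by simp only [lexCut, Pi.add_apply, mul_add, sum_add_distrib]
  map_smul c x := by simp only [lexCut, Pi.smul_apply, smul_eq_mul, mul_sum, mul_left_comm]

lemma convex_lexCutPolyhedron (yb : Fin n → ℝ) : Convex ℝ (lexCutPolyhedron yb) :=
  fun _ hx _ hy _ _ ha hb hab =>
    ⟨convex_Ici (0 : Fin n → ℝ) hx.1 hy.1 ha hb hab,
      fun k => convex_halfSpace_ge (isLinearMap_lexCut yb k) _ (hx.2 k) (hy.2 k) ha hb hab⟩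

lemma lexCut_self (yb : Fin n → ℝ) (k : Fin n) :
    lexCut yb yb k = yb k * ∏ j ∈ Iio k, (yb j + 1) := by
  have htel : ∏ j ∈ Iio k, (yb j + 1) = 1 + ∑ i ∈ Iio k, yb i * ∏ j ∈ Ioo i k, (yb j + 1) := by
    -- expand `1 = ∏ ((ȳ_j + 1) - ȳ_j)` in order
    have h := prod_add_ordered (Iio k) (fun j => yb j + 1) (fun j => -yb j)
    have hfilter : ∀ i ∈ Iio k, {j ∈ Iio k | i < j} = Ioo i k := fun i _ => by
      ext j; simp [and_comm]
    simp only [add_neg_cancel_comm, prod_const_one, mul_one, neg_mul, sum_neg_distrib] at h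
    rw [sum_congr rfl fun i hi => by rw [hfilter i hi]] at h
    linarith
  have hcoef : ∀ i ∈ Iio k, lexCutCoef yb k i * yb i = yb k * (yb i * ∏ j ∈ Ioo i k, (yb j + 1)) :=
    fun i hi => by rw [lexCutCoef, if_neg (mem_Iio.mp hi).ne]; ring
  rw [lexCut, ← Iio_insert, sum_insert (by simp), lexCutCoef, if_pos rfl, sum_congr rfl hcoef,
    ← mul_sum, htel]
  ring

lemma lexCutCoef_cons_succ_succ (a : ℝ) (yb : Fin n → ℝ) (k i : Fin n) :
    lexCutCoef (Fin.cons a yb) k.succ i.succ = lexCutCoef yb k i := by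
  simp only [lexCutCoef, Fin.succ_inj, Fin.cons_succ, ← Fin.map_succEmb_Ioo, prod_map]
  rfl

lemma lexCutCoef_cons_succ_zero (a : ℝ) (yb : Fin n → ℝ) (k : Fin n) :
    lexCutCoef (Fin.cons a yb) k.succ 0 = lexCut yb yb k := by
  rw [lexCutCoef, if_neg (Fin.succ_ne_zero k).symm, lexCut_self, ← Fin.map_succEmb_Iio, prod_map]
  simp

lemma lexCut_zero (yb y : Fin (n + 1) → ℝ) : lexCut yb y 0 = y 0 := by
  have : Iic (0 : Fin (n + 1)) = {0} := by ext i; simp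
  simp [lexCut, lexCutCoef, this]

lemma lexCut_cons_succ (a b : ℝ) (yb y : Fin n → ℝ) (k : Fin n) :
    lexCut (Fin.cons a yb) (Fin.cons b y) k.succ = lexCut yb yb k * b + lexCut yb y k := by
  simp only [lexCut, Fin.sum_Iic_succ, lexCutCoef_cons_succ_zero, lexCutCoef_cons_succ_succ,
    Fin.cons_zero, Fin.cons_succ]

lemma lexCut_le_lexCut_of_toLex_le {yb z : Fin n → ℝ} (hyb : 0 ≤ yb) (hybI : isInt yb)
    (hz : 0 ≤ z) (hzI : isInt z) (hle : toLex yb ≤ toLex z) (k : Fin n) :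
    lexCut yb yb k ≤ lexCut yb z k := by
  induction n with
  | zero => exact k.elim0
  | succ n ih =>
    induction yb using Fin.consCases with | cons a yb =>
    induction z using Fin.consCases with | cons b z =>
    rw [Fin.cons_nonneg_iff] at hyb hz
    rw [isInt_cons] at hybI hzI
    rw [toLex_cons_le_toLex_cons] at hle
    induction k using Fin.cases with
    | zero =>
      rw [lexCut_zero, lexCut_zero]
      rcases hle with hlt | ⟨rfl, -⟩
      exacts [hlt.le, le_rfl]
    | succ k =>
      rw [lexCut_cons_succ, lexCut_cons_succ]
      rcases hle with hlt | ⟨rfl, htail⟩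
      · obtain ⟨p, rfl⟩ := hybI.1
        obtain ⟨q, rfl⟩ := hzI.1
        have hpq : (p : ℝ) + 1 ≤ q := by exact_mod_cast Int.cast_lt.mp hlt
        nlinarith [lexCut_nonneg hyb.2 hyb.2 k, lexCut_nonneg hyb.2 hz.2 k]
      · linarith [ih hyb.2 hybI.2 hz.2 hzI.2 htail k]

lemma lexIntPoints_subset_lexCutPolyhedron {yb : Fin n → ℝ} (hyb : 0 ≤ yb) (hybI : isInt yb) :
    lexIntPoints yb ⊆ lexCutPolyhedron yb :=
  fun _ ⟨hz, hzI, hle⟩ => ⟨hz, lexCut_le_lexCut_of_toLex_le hyb hybI hz hzI hle⟩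

lemma cons_mem_lexIntPoints_of_lt {a b : ℝ} {yb z : Fin n → ℝ} (hb : 0 ≤ b) (hbI : ∃ q : ℤ, b = q)
    (hz : 0 ≤ z) (hzI : isInt z) (hab : a < b) :
    (Fin.cons b z : Fin (n + 1) → ℝ) ∈ lexIntPoints (Fin.cons a yb) :=
  ⟨Fin.cons_nonneg_iff.mpr ⟨hb, hz⟩, isInt_cons.mpr ⟨hbI, hzI⟩,
    toLex_cons_le_toLex_cons.mpr (Or.inl hab)⟩

lemma image_cons_lexIntPoints_subset {a : ℝ} {yb : Fin n → ℝ} (ha : 0 ≤ a)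
    (haI : ∃ p : ℤ, a = p) :
    (Fin.cons a '' lexIntPoints yb : Set (Fin (n + 1) → ℝ)) ⊆ lexIntPoints (Fin.cons a yb) := by
  rintro _ ⟨z, ⟨hz, hzI, hle⟩, rfl⟩
  exact ⟨Fin.cons_nonneg_iff.mpr ⟨ha, hz⟩, isInt_cons.mpr ⟨haI, hzI⟩,
    toLex_cons_le_toLex_cons.mpr (Or.inr ⟨rfl, hle⟩)⟩

lemma cons_mem_convexHull_lexIntPoints_of_add_one_le {a b : ℝ} {yb y : Fin n → ℝ}
    (ha : 0 ≤ a) (haI : ∃ p : ℤ, a = p) (hab : a + 1 ≤ b) (hy : 0 ≤ y) :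
    (Fin.cons b y : Fin (n + 1) → ℝ) ∈ convexHull ℝ (lexIntPoints (Fin.cons a yb)) := by
  obtain ⟨p, rfl⟩ := haI
  set c : Fin (n + 1) → ℤ := Fin.cons (p + 1) 0
  have hbox : Set.univ.pi (fun i => (Int.cast : ℤ → ℝ) '' Set.Ici (c i)) ⊆
      lexIntPoints (Fin.cons (p : ℝ) yb) := by
    intro z hz
    choose q hqc hqz using Set.mem_univ_pi.mp hz
    have hzc : ∀ i, (c i : ℝ) ≤ z i := fun i => hqz i ▸ Int.cast_le.mpr (hqc i)
    have hz0 : (p : ℝ) + 1 ≤ z 0 := by simpa [c] using hzc 0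
    rw [← Fin.cons_self_tail z]
    exact cons_mem_lexIntPoints_of_lt (by linarith) ⟨q 0, (hqz 0).symm⟩
      (fun i => show (0 : ℝ) ≤ z i.succ by simpa [c] using hzc i.succ)
      (fun i => ⟨q i.succ, (hqz i.succ).symm⟩) (by linarith)
  refine convexHull_mono hbox ?_
  rw [convexHull_pi, Set.mem_univ_pi]
  intro i
  rw [convexHull_intCast_Ici]
  induction i using Fin.cases with
  | zero => simpa [c] using hab
  | succ i => simpa [c] using hy i

lemma cons_mem_convexHull_lexIntPoints_of_lt_add_one {a b : ℝ} {yb y : Fin n → ℝ}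
    (hP : lexCutPolyhedron yb ⊆ convexHull ℝ (lexIntPoints yb))
    (ha : 0 ≤ a) (haI : ∃ p : ℤ, a = p)
    (hy : (Fin.cons b y : Fin (n + 1) → ℝ) ∈ lexCutPolyhedron (Fin.cons a yb)) (hba : b < a + 1) :
    (Fin.cons b y : Fin (n + 1) → ℝ) ∈ convexHull ℝ (lexIntPoints (Fin.cons a yb)) := by
  obtain ⟨hy0, hcut⟩ := hy
  have hab : a ≤ b := by simpa only [lexCut_zero, Fin.cons_zero] using hcut 0
  set t := a + 1 - b with ht
  have htpos : 0 < t := by linarith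
  have hw : t⁻¹ • y ∈ lexCutPolyhedron yb := by
    refine ⟨smul_nonneg (inv_nonneg.mpr htpos.le) (Fin.cons_nonneg_iff.mp hy0).2, fun k => ?_⟩
    have hk := hcut k.succ
    rw [lexCut_cons_succ, lexCut_cons_succ] at hk
    rw [(isLinearMap_lexCut yb k).map_smul, smul_eq_mul, le_inv_mul_iff₀ htpos, ht]
    linarith
  have hu : (Fin.cons a (t⁻¹ • y) : Fin (n + 1) → ℝ) ∈
      convexHull ℝ (lexIntPoints (Fin.cons a yb)) := by
    refine convexHull_mono (image_cons_lexIntPoints_subset ha haI) ?_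
    rw [← image_cons_convexHull]
    exact Set.mem_image_of_mem _ (hP hw)
  have hv : (Fin.cons (a + 1) 0 : Fin (n + 1) → ℝ) ∈ lexIntPoints (Fin.cons a yb) := by
    obtain ⟨p, rfl⟩ := haI
    exact cons_mem_lexIntPoints_of_lt (by linarith) ⟨p + 1, by push_cast; rfl⟩ le_rfl
      (fun _ => ⟨0, by simp⟩) (lt_add_one _)
  have hy_eq : (Fin.cons b y : Fin (n + 1) → ℝ) =
      t • Fin.cons a (t⁻¹ • y) + (b - a) • Fin.cons (a + 1) 0 := by
    ext i
    induction i using Fin.cases with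
    | zero => simp only [Pi.add_apply, Pi.smul_apply, Fin.cons_zero, smul_eq_mul, ht]; ring
    | succ i => simp [mul_inv_cancel_left₀ htpos.ne']
  rw [hy_eq]
  exact convex_convexHull ℝ _ hu (subset_convexHull ℝ _ hv) htpos.le (by linarith) (by ring)

lemma lexCutPolyhedron_subset_convexHull {yb : Fin n → ℝ} (hyb : 0 ≤ yb) (hybI : isInt yb) :
    lexCutPolyhedron yb ⊆ convexHull ℝ (lexIntPoints yb) := by
  induction n with
  | zero =>
    intro y _
    rw [Subsingleton.elim y yb]
    exact subset_convexHull ℝ _ ⟨hyb, hybI, le_rfl⟩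
  | succ n ih =>
    induction yb using Fin.consCases with | cons a yb =>
    rw [Fin.cons_nonneg_iff] at hyb
    rw [isInt_cons] at hybI
    intro y hy
    induction y using Fin.consCases with | cons b y =>
    rcases le_or_gt (a + 1) b with hab | hba
    · exact cons_mem_convexHull_lexIntPoints_of_add_one_le hyb.1 hybI.1 hab
        (Fin.cons_nonneg_iff.mp hy.1).2
    · exact cons_mem_convexHull_lexIntPoints_of_lt_add_one (ih hyb.2 hybI.2) hyb.1 hybI.1 hy hba

theorem convexHull_lexIntPoints {yb : Fin n → ℝ} (hyb : 0 ≤ yb) (hybI : isInt yb) :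
    convexHull ℝ (lexIntPoints yb) = lexCutPolyhedron yb :=
  (convexHull_min (lexIntPoints_subset_lexCutPolyhedron hyb hybI)
    (convex_lexCutPolyhedron yb)).antisymm (lexCutPolyhedron_subset_convexHull hyb hybI)

noncomputable def unimodularEquiv (C : Matrix (Fin n) (Fin n) ℤ) (hC : IsUnit C.det) :
    (Fin n → ℝ) ≃ₗ[ℝ] (Fin n → ℝ) :=
  .ofLinearMap (Matrix.toLin' ((Int.castRingHom ℝ).mapMatrix C))
    (Matrix.toLin' ((Int.castRingHom ℝ).mapMatrix C⁻¹))
    (by rw [← Matrix.toLin'_mul, ← map_mul, C.mul_nonsing_inv hC, map_one, Matrix.toLin'_one])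
    (by rw [← Matrix.toLin'_mul, ← map_mul, C.nonsing_inv_mul hC, map_one, Matrix.toLin'_one])

section unimodular

variable {C : Matrix (Fin n) (Fin n) ℤ} {hC : IsUnit C.det}

lemma isInt_unimodularEquiv_iff {x : Fin n → ℝ} : isInt (unimodularEquiv C hC x) ↔ isInt x := by
  refine ⟨fun hx => ?_, isInt_mulVec C⟩
  have hinv : ((Int.castRingHom ℝ).mapMatrix C⁻¹).mulVec (unimodularEquiv C hC x) = x :=
    (unimodularEquiv C hC).symm_apply_apply x
  exact hinv ▸ isInt_mulVec C⁻¹ hx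

lemma lexLeC_iff_toLex_le {xb x : Fin n → ℝ} :
    lexLeC C xb x ↔ toLex (unimodularEquiv C hC xb) ≤ toLex (unimodularEquiv C hC x) := by
  rw [le_iff_lt_or_eq, toLex_inj, (unimodularEquiv C hC).injective.eq_iff]
  exact or_congr (exists_congr fun _ => and_comm) Iff.rfl

lemma preimage_lexIntPoints (xb : Fin n → ℝ) :
    unimodularEquiv C hC ⁻¹' lexIntPoints (unimodularEquiv C hC xb) =
      {x | (∀ i, 0 ≤ rdot (C i) x) ∧ isInt x ∧ lexLeC C xb x} := by
  ext x
  simp only [lexIntPoints, Set.mem_preimage, Set.mem_ofPred_eq, isInt_unimodularEquiv_iff,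
    lexLeC_iff_toLex_le (hC := hC)]
  rfl

end unimodular

theorem stmt9_general {n : ℕ} (C : Matrix (Fin n) (Fin n) ℤ) (hC : C.det = 1 ∨ C.det = -1)
    (xb : Fin n → ℝ) (hK : ∀ i, 0 ≤ rdot (C i) xb) (hI : isInt xb) :
    QC C xb = {x : Fin n → ℝ | (∀ i, 0 ≤ rdot (C i) x) ∧ ∀ k : Fin n,
      ∑ i ∈ Finset.Iic k, dcoefC C xb k i * rdot (C i) x ≥
        ∑ i ∈ Finset.Iic k, dcoefC C xb k i * rdot (C i) xb} := by
  set e := unimodularEquiv C (Int.isUnit_iff.mpr hC)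
  have hybI : isInt (e xb) := isInt_unimodularEquiv_iff.mpr hI
  calc QC C xb = convexHull ℝ (e ⁻¹' lexIntPoints (e xb)) := by rw [QC, preimage_lexIntPoints]
    _ = e ⁻¹' lexCutPolyhedron (e xb) := by
      rw [e.convexHull_preimage, convexHull_lexIntPoints (yb := e xb) hK hybI]
    -- `dcoefC C xb = lexCutCoef (e xb)` and `rdot (C i) x = e x i` hold definitionally
    _ = _ := rfl

/-- For a lattice basis (rows of a unimodular `C`) and `x̄ ∈ K_C ∩ ℤⁿ`, `x̄ ≠ 0`, the
lex-cuts for `k = 1,…,n` and the inequalities `cⁱ·x ≥ 0` describe `Q_C(x̄)`. -/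
theorem stmt9 {n : ℕ} (C : Matrix (Fin n) (Fin n) ℤ) (hC : C.det = 1 ∨ C.det = -1)
    (xb : Fin n → ℝ) (hK : ∀ i, 0 ≤ rdot (C i) xb) (hI : isInt xb) (hx0 : xb ≠ 0) :
    QC C xb = {x : Fin n → ℝ | (∀ i, 0 ≤ rdot (C i) x) ∧ ∀ k : Fin n,
      ∑ i ∈ Finset.Iic k, dcoefC C xb k i * rdot (C i) x ≥
        ∑ i ∈ Finset.Iic k, dcoefC C xb k i * rdot (C i) xb} :=
  stmt9_general C hC xb hK hI
end

section
/- Let c¹,…,cⁿ be a lattice basis of ℤⁿ, let S ⊆ K_C be a nonempty compact set, and let x̄ be the lexicographically minimum point of S with respect to ⪯_C. Suppose x̄ ∉ ℤⁿ, and let k be the smallest index with c^k·x̄ ∉ ℤ. Then the inequality ∑_{i=1}^k d̂^k_i (c^i·x) ≥ ∑_{i=1}^{k−1} d̂^k_i (c^i·x̄) + ⌈c^k·x̄⌉, where d̂^k_k := 1, d̂^k_{k−1} := ⌈c^k·x̄⌉, and d̂^k_i := ⌈c^k·x̄⌉·∏_{j=i+1}^{k−1}(c^j·x̄ + 1) for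 i ≤ k−2, is a cutting plane: it is satisfied by every x ∈ S ∩ ℤⁿ and violated by x̄. -/
/-- The cutting-plane coefficients `d̂^k_i`: `d̂^k_k = 1`, `d̂^k_{k-1} = ⌈cᵏ·x̄⌉`, and
`d̂^k_i = ⌈cᵏ·x̄⌉·∏_{j=i+1}^{k-1}(cʲ·x̄ + 1)` for `i ≤ k-2`. -/
noncomputable def dhat {n : ℕ} (C : Matrix (Fin n) (Fin n) ℤ) (xb : Fin n → ℝ)
    (k i : Fin n) : ℝ :=
  if i = k then 1 else (⌈rdot (C k) xb⌉ : ℝ) * ∏ j ∈ Finset.Ioo i k, (rdot (C j) xb + 1)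

/-!
Write `bⱼ = cʲ·x̄ ≥ 0` and `m = ⌈bₖ⌉`. The coefficients telescope:
`d̂ᵢ = ∑_{i<j<k} d̂ⱼ bⱼ + m` for `i < k`. An integer point `x ∈ S` differs from `x̄`
(as `bₖ ∉ ℤ`), so it is lexicographically larger: its coordinates `aⱼ = cʲ·x` agree with `bⱼ`
below some `i ≤ k` and `aᵢ > bᵢ`. Integrality gives `aᵢ ≥ bᵢ + 1` if `i < k` and `aₖ ≥ m`
if `i = k`, and by the telescoping identity either bound is exactly the missing right-hand side.
-/

open Finset

theorem Finset.prod_add_one_ordered_gt {ι R : Type*} [CommSemiring R] [LinearOrder ι]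
    (s : Finset ι) (f : ι → R) :
    ∏ i ∈ s, (f i + 1) = 1 + ∑ i ∈ s, f i * ∏ j ∈ s with i < j, (f j + 1) := by
  simp only [add_comm _ (1 : R)]
  exact Finset.prod_one_add_ordered (ι := ιᵒᵈ) s f

theorem isInt.exists_rdot_eq {n : ℕ} {x : Fin n → ℝ} (hx : isInt x) (c : Fin n → ℤ) :
    ∃ z : ℤ, rdot c x = z := by
  choose z hz using hx
  exact ⟨∑ j, c j * z j, by simp [rdot, hz]⟩

section CutCoeff

variable {ι : Type*} [LinearOrder ι] [LocallyFiniteOrder ι] {a b : ι → ℝ} {i k : ι}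

noncomputable def cutCoeff (b : ι → ℝ) (k i : ι) : ℝ :=
  if i = k then 1 else ⌈b k⌉ * ∏ j ∈ Ioo i k, (b j + 1)

theorem dhat_eq_cutCoeff {n : ℕ} (C : Matrix (Fin n) (Fin n) ℤ) (x : Fin n → ℝ) (k : Fin n) :
    dhat C x k = cutCoeff (fun j ↦ rdot (C j) x) k := rfl

@[simp]
theorem cutCoeff_self : cutCoeff b k k = 1 := if_pos rfl

theorem cutCoeff_of_ne (h : i ≠ k) : cutCoeff b k i = ⌈b k⌉ * ∏ j ∈ Ioo i k, (b j + 1) :=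
  if_neg h

theorem cutCoeff_nonneg (hb : ∀ j, 0 ≤ b j) : 0 ≤ cutCoeff b k i := by
  unfold cutCoeff
  split_ifs
  · exact zero_le_one
  · exact mul_nonneg (by exact_mod_cast Int.ceil_nonneg (hb k))
      (prod_nonneg fun j _ ↦ by linarith [hb j])

theorem cutCoeff_eq_sum_add_ceil (h : i < k) :
    cutCoeff b k i = ∑ j ∈ Ioo i k, cutCoeff b k j * b j + ⌈b k⌉ := by
  have hfilter : ∀ j ∈ Ioo i k, {l ∈ Ioo i k | j < l} = Ioo j k := fun j hj ↦ by
    ext l; simp only [mem_filter, mem_Ioo] at hj ⊢; grind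
  rw [cutCoeff_of_ne h.ne, prod_add_one_ordered_gt, mul_add, mul_one, mul_sum, add_comm]
  congr 1
  refine sum_congr rfl fun j hj ↦ ?_
  rw [cutCoeff_of_ne (mem_Ioo.1 hj).2.ne, hfilter j hj]
  ring

theorem sum_Ico_cutCoeff_mul_add_ceil_le (hb : ∀ j, 0 ≤ b j)
    (hbint : ∀ j < k, ∃ z : ℤ, b j = z) (hai : ∃ z : ℤ, a i = z) (hik : i ≤ k)
    (hlt : b i < a i) :
    ∑ j ∈ Ico i k, cutCoeff b k j * b j + ⌈b k⌉ ≤ cutCoeff b k i * a i := by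
  obtain ⟨w, hw⟩ := hai
  rcases hik.eq_or_lt with rfl | hik
  · rw [Ico_self, sum_empty, zero_add, cutCoeff_self, one_mul, hw]
    exact_mod_cast Int.ceil_le.2 (hw ▸ hlt).le
  · have hstep : b i + 1 ≤ a i := by
      obtain ⟨z, hz⟩ := hbint i hik
      rw [hz, hw] at hlt ⊢
      exact_mod_cast Int.add_one_le_of_lt (by exact_mod_cast hlt)
    rw [← Ioo_insert_left hik, sum_insert left_notMem_Ioo, add_assoc,
      ← cutCoeff_eq_sum_add_ceil hik]
    calc cutCoeff b k i * b i + cutCoeff b k i = cutCoeff b k i * (b i + 1) := by ring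
      _ ≤ cutCoeff b k i * a i := mul_le_mul_of_nonneg_left hstep (cutCoeff_nonneg hb)

variable [LocallyFiniteOrderBot ι]

theorem sum_Iio_cutCoeff_mul_add_ceil_le (ha : ∀ j, 0 ≤ a j) (hb : ∀ j, 0 ≤ b j)
    (hbint : ∀ j < k, ∃ z : ℤ, b j = z) (hai : ∃ z : ℤ, a i = z) (hik : i ≤ k)
    (hlt : b i < a i) (heq : ∀ j < i, b j = a j) :
    ∑ j ∈ Iio k, cutCoeff b k j * b j + ⌈b k⌉ ≤ ∑ j ∈ Iic k, cutCoeff b k j * a j := by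
  have hsplit : ∑ j ∈ Iio k, cutCoeff b k j * b j =
      ∑ j ∈ Iio i, cutCoeff b k j * a j + ∑ j ∈ Ico i k, cutCoeff b k j * b j := by
    rw [← sum_filter_add_sum_filter_not (Iio k) (· < i)]
    congr 1
    · rw [Iio_filter_lt, min_eq_right hik]
      exact sum_congr rfl fun j hj ↦ by rw [heq j (mem_Iio.1 hj)]
    · congr 1; ext j; simp only [mem_filter, mem_Iio, mem_Ico, not_lt]; tauto
  calc ∑ j ∈ Iio k, cutCoeff b k j * b j + ⌈b k⌉
      = ∑ j ∈ Iio i, cutCoeff b k j * a j +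
          (∑ j ∈ Ico i k, cutCoeff b k j * b j + ⌈b k⌉) := by rw [hsplit, add_assoc]
    _ ≤ ∑ j ∈ Iio i, cutCoeff b k j * a j + cutCoeff b k i * a i := by
      gcongr; exact sum_Ico_cutCoeff_mul_add_ceil_le hb hbint hai hik hlt
    _ = ∑ j ∈ Iic i, cutCoeff b k j * a j := by
      rw [← Iio_insert, sum_insert notMem_Iio_self, add_comm]
    _ ≤ ∑ j ∈ Iic k, cutCoeff b k j * a j :=
      sum_le_sum_of_subset_of_nonneg (Iic_subset_Iic.2 hik)
        fun j _ _ ↦ mul_nonneg (cutCoeff_nonneg hb) (ha j)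

theorem sum_Iic_cutCoeff_mul_lt (hk : ¬ ∃ z : ℤ, b k = z) :
    ∑ j ∈ Iic k, cutCoeff b k j * b j < ∑ j ∈ Iio k, cutCoeff b k j * b j + ⌈b k⌉ := by
  rw [← Iio_insert, sum_insert notMem_Iio_self, cutCoeff_self, one_mul, add_comm]
  exact add_lt_add_right ((Int.le_ceil _).lt_of_ne fun h ↦ hk ⟨_, h⟩) _

end CutCoeff

theorem stmt11_general {n : ℕ} (C : Matrix (Fin n) (Fin n) ℤ)
    (S : Set (Fin n → ℝ)) (hSK : ∀ x ∈ S, ∀ i, 0 ≤ rdot (C i) x)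
    (xb : Fin n → ℝ) (hmem : xb ∈ S) (hlex : ∀ x ∈ S, lexLeC C xb x)
    (k : Fin n) (hk : ¬ ∃ z : ℤ, rdot (C k) xb = (z : ℝ))
    (hmin : ∀ j : Fin n, j < k → ∃ z : ℤ, rdot (C j) xb = (z : ℝ)) :
    (∀ x ∈ S, isInt x →
      ∑ i ∈ Finset.Iic k, dhat C xb k i * rdot (C i) x ≥
        ∑ i ∈ Finset.Iio k, dhat C xb k i * rdot (C i) xb + (⌈rdot (C k) xb⌉ : ℝ)) ∧
    ∑ i ∈ Finset.Iic k, dhat C xb k i * rdot (C i) xb <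
      ∑ i ∈ Finset.Iio k, dhat C xb k i * rdot (C i) xb + (⌈rdot (C k) xb⌉ : ℝ) := by
  simp only [dhat_eq_cutCoeff]
  refine ⟨fun x hxS hxint ↦ ?_, sum_Iic_cutCoeff_mul_lt hk⟩
  obtain ⟨i, hlt, heq⟩ : lexLtC C xb x :=
    (hlex x hxS).resolve_right fun h ↦ hk (h ▸ hxint.exists_rdot_eq (C k))
  have hik : i ≤ k := not_lt.1 fun hki ↦ hk (heq k hki ▸ hxint.exists_rdot_eq (C k))
  exact sum_Iio_cutCoeff_mul_add_ceil_le (hSK x hxS) (hSK xb hmem) hmin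
    (hxint.exists_rdot_eq (C i)) hik hlt heq

/-- Let `c¹,…,cⁿ` (rows of a unimodular `C`) be a lattice basis of `ℤⁿ`, `S ⊆ K_C`
nonempty compact, `x̄` the lex-min point of `S`, `x̄ ∉ ℤⁿ`, and `k` the smallest index
with `cᵏ·x̄ ∉ ℤ`. Then the inequality
`∑_{i≤k} d̂^k_i (cⁱ·x) ≥ ∑_{i<k} d̂^k_i (cⁱ·x̄) + ⌈cᵏ·x̄⌉`
is satisfied by every integer point of `S` and violated by `x̄`: it is a cutting plane. -/
theorem stmt11 {n : ℕ} (C : Matrix (Fin n) (Fin n) ℤ) (hC : C.det = 1 ∨ C.det = -1)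
    (S : Set (Fin n → ℝ)) (hSK : ∀ x ∈ S, ∀ i, 0 ≤ rdot (C i) x)
    (hne : S.Nonempty) (hcomp : IsCompact S)
    (xb : Fin n → ℝ) (hmem : xb ∈ S) (hlex : ∀ x ∈ S, lexLeC C xb x)
    (hnotint : ¬ isInt xb)
    (k : Fin n) (hk : ¬ ∃ z : ℤ, rdot (C k) xb = (z : ℝ))
    (hmin : ∀ j : Fin n, j < k → ∃ z : ℤ, rdot (C j) xb = (z : ℝ)) :
    (∀ x ∈ S, isInt x →
      ∑ i ∈ Finset.Iic k, dhat C xb k i * rdot (C i) x ≥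
        ∑ i ∈ Finset.Iio k, dhat C xb k i * rdot (C i) xb + (⌈rdot (C k) xb⌉ : ℝ)) ∧
    ∑ i ∈ Finset.Iic k, dhat C xb k i * rdot (C i) xb <
      ∑ i ∈ Finset.Iio k, dhat C xb k i * rdot (C i) xb + (⌈rdot (C k) xb⌉ : ℝ) :=
  stmt11_general C S hSK xb hmem hlex k hk hmin
end

section
/- Let S ⊆ ℝⁿ be nonempty and compact, let g ∈ ℤⁿ have relatively prime entries, and let γ ∈ ℝ be such that g·x ≥ γ for every x ∈ S (so that g·x ≥ ⌈γ⌉ is a Chvátal–Gomory inequality for S) and such that g·x < ⌈γ⌉ for at least one x ∈ S (the inequality is proper). Then there exists a unimodular integer matrix C with first row g such that, denoting by x̄ the lexicographically minimum point of S with respect to the order ⪯_C induced by the rows of C, one has g·x̄ ∉ ℤ and ⌈g·x̄⌉ = ⌈γ⌉; consequently the first lex-cut g·x ≥ ⌈g·x̄⌉ generated from x̄ coincides with the Chvátal–Gomory inequality g·x ≥ ⌈γ⌉. -/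
open Module

theorem Module.Basis.exists_apply_zero_eq_of_apply_eq_one {R M : Type*} [CommRing R] [IsDomain R]
    [IsPrincipalIdealRing R] [AddCommGroup M] [Module R M] [Free R M] [Module.Finite R M]
    (φ : M →ₗ[R] R) {v : M} (hv : φ v = 1) :
    ∃ (k : ℕ) (b : Basis (Fin (k + 1)) R M), b 0 = v := by
  have hli : ∀ c : R, ∀ x ∈ LinearMap.ker φ, c • v + x = 0 → c = 0 := by
    intro c x hx h
    simpa [hv, LinearMap.mem_ker.mp hx] using congrArg φ h
  have hsp : ∀ z : M, ∃ c : R, z + c • v ∈ LinearMap.ker φ :=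
    fun z => ⟨-φ z, by simp [hv]⟩
  exact ⟨_, Basis.mkFinCons v (Module.finBasis R (LinearMap.ker φ)) hli hsp, by simp⟩

theorem exists_basis_apply_eq_of_gcd_eq_one {n : ℕ} (i : Fin n) (g : Fin n → ℤ)
    (hg : Finset.univ.gcd g = 1) : ∃ b : Basis (Fin n) ℤ (Fin n → ℤ), b i = g := by
  obtain ⟨a, ha⟩ := Finset.univ.gcd_eq_sum_mul g
  obtain ⟨k, b, hb⟩ := Basis.exists_apply_zero_eq_of_apply_eq_one
    (Fintype.linearCombination ℤ a) (v := g) (by simp [Fintype.linearCombination_apply, ← ha, hg])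
  have hk : k + 1 = n := by simpa using Fintype.card_congr (b.indexEquiv (Pi.basisFun ℤ (Fin n)))
  subst hk
  exact ⟨b.reindex (Equiv.swap 0 i), by simp [hb]⟩

theorem Matrix.det_of_basis_eq_one_or_neg_one {n : ℕ} (b : Basis (Fin n) ℤ (Fin n → ℤ)) :
    (Matrix.of b).det = 1 ∨ (Matrix.of b).det = -1 :=
  Int.isUnit_iff.mp (Pi.basisFun_det_apply (R := ℤ) b ▸ (Pi.basisFun ℤ (Fin n)).isUnit_det b)

theorem rdot_le_of_lexLeC {n : ℕ} {C : Matrix (Fin n) (Fin n) ℤ} {x y : Fin n → ℝ} (hn : 0 < n)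
    (h : lexLeC C x y) : rdot (C ⟨0, hn⟩) x ≤ rdot (C ⟨0, hn⟩) y := by
  rcases h with ⟨i, hlt, heq⟩ | rfl
  · rcases Nat.eq_zero_or_pos i with h0 | hpos
    · exact (Fin.ext h0 : i = ⟨0, hn⟩) ▸ hlt.le
    · exact (heq ⟨0, hn⟩ hpos).le
  · exact le_rfl

theorem not_exists_intCast_eq_and_ceil_eq {t γ : ℝ} (hγt : γ ≤ t) (ht : t < ⌈γ⌉) :
    (¬ ∃ z : ℤ, t = z) ∧ ⌈t⌉ = ⌈γ⌉ := by
  refine ⟨?_, le_antisymm (Int.ceil_le.mpr ht.le) (Int.ceil_le_ceil hγt)⟩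
  rintro ⟨z, rfl⟩
  have : ⌈γ⌉ ≤ z := Int.ceil_le.mpr hγt
  exact absurd (Int.cast_lt.mp ht) this.not_gt

theorem stmt13_general {n : ℕ} (hn : 0 < n) (S : Set (Fin n → ℝ))
    (g : Fin n → ℤ) (hg : Finset.univ.gcd g = 1)
    (γ : ℝ) (hvalid : ∀ x ∈ S, γ ≤ rdot g x)
    (hproper : ∃ x ∈ S, rdot g x < (⌈γ⌉ : ℝ)) :
    ∃ C : Matrix (Fin n) (Fin n) ℤ, (C.det = 1 ∨ C.det = -1) ∧
      C ⟨0, hn⟩ = g ∧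
      ∀ xb : Fin n → ℝ, xb ∈ S → (∀ x ∈ S, lexLeC C xb x) →
        (¬ ∃ z : ℤ, rdot g xb = (z : ℝ)) ∧ ⌈rdot g xb⌉ = ⌈γ⌉ := by
  obtain ⟨b, hb⟩ := exists_basis_apply_eq_of_gcd_eq_one ⟨0, hn⟩ g hg
  refine ⟨Matrix.of b, Matrix.det_of_basis_eq_one_or_neg_one b, hb, fun xb hxb hmin => ?_⟩
  obtain ⟨x, hxS, hx⟩ := hproper
  have hle : rdot g xb ≤ rdot g x := hb ▸ rdot_le_of_lexLeC hn (hmin x hxS)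
  exact not_exists_intCast_eq_and_ceil_eq (hvalid xb hxb) (hle.trans_lt hx)

/-- Let `S ⊆ ℝⁿ` be nonempty compact, `g ∈ ℤⁿ` with relatively prime entries, and `γ ∈ ℝ`
with `g·x ≥ γ` valid for `S` and `g·x ≥ ⌈γ⌉` violated by some point of `S` (a proper
Chvátal–Gomory inequality). Then there is a unimodular integer matrix `C` with first row
`g` such that the lex-min point `x̄` of `S` w.r.t. `⪯_C` satisfies `g·x̄ ∉ ℤ` and
`⌈g·x̄⌉ = ⌈γ⌉`, i.e. the first lex-cut `g·x ≥ ⌈g·x̄⌉` coincides with `g·x ≥ ⌈γ⌉`. -/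
theorem stmt13 {n : ℕ} (hn : 0 < n) (S : Set (Fin n → ℝ)) (hne : S.Nonempty)
    (hcomp : IsCompact S)
    (g : Fin n → ℤ) (hg : Finset.univ.gcd g = 1)
    (γ : ℝ) (hvalid : ∀ x ∈ S, γ ≤ rdot g x)
    (hproper : ∃ x ∈ S, rdot g x < (⌈γ⌉ : ℝ)) :
    ∃ C : Matrix (Fin n) (Fin n) ℤ, (C.det = 1 ∨ C.det = -1) ∧
      C ⟨0, hn⟩ = g ∧
      ∀ xb : Fin n → ℝ, xb ∈ S → (∀ x ∈ S, lexLeC C xb x) →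
        (¬ ∃ z : ℤ, rdot g xb = (z : ℝ)) ∧ ⌈rdot g xb⌉ = ⌈γ⌉ :=
  stmt13_general hn S g hg γ hvalid hproper
end

section
/- Let T ⊆ ℝ² be the triangle conv{(0,0), (1,0), (1/2,−1)}. Then: (a) the inequality x₂ ≥ 0 is a split cut for T (it is valid for both {x ∈ T : x₁ ≤ 0} and {x ∈ T : x₁ ≥ 1}); (b) for every lattice basis {c¹, c²} of ℤ² such that x̄ := (1/2, −1) is the lexicographically minimum point of T with respect to ⪯_C, setting ℓ₂ := ⌈min{c²·x : x ∈ T}⌉ and letting k be the smallest index with c^k·x̄ ∉ ℤ, there exists a point x ∈ T with x₂ < 0 that satisfies the generated lex-cut inequality, namely c¹·x ≥ ⌈c¹·x̄⌉ if k = 1, and ⌈c²·x̄ − ℓ₂⌉·(c¹·x − c¹·x̄) + c²·x ≥ ⌈c²·x̄⌉ if k = 2. Hence the split cut x₂ ≥ 0 is not implied by any such lex-cut on T. -/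
def triangle : Set (Fin 2 → ℝ) := convexHull ℝ {![0, 0], ![1, 0], ![1/2, -1]}

local notation "x̄" => (![1/2, -1] : Fin 2 → ℝ)

/-- `riseA c = 2 c·((0,0) - x̄)` and `riseB c = 2 c·((1,0) - x̄)`. -/
def riseA (c : Fin 2 → ℤ) : ℤ := 2 * c 1 - c 0

def riseB (c : Fin 2 → ℤ) : ℤ := c 0 + 2 * c 1

lemma riseA_add_riseB (c : Fin 2 → ℤ) : riseA c + riseB c = 4 * c 1 := by
  simp only [riseA, riseB]; ring

lemma riseA_smul_add (k : ℤ) (c d : Fin 2 → ℤ) : riseA (k • c + d) = k * riseA c + riseA d := by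
  simp only [riseA, Pi.add_apply, Pi.smul_apply, smul_eq_mul]; ring

lemma riseB_smul_add (k : ℤ) (c d : Fin 2 → ℤ) : riseB (k • c + d) = k * riseB c + riseB d := by
  simp only [riseB, Pi.add_apply, Pi.smul_apply, smul_eq_mul]; ring

lemma rdot_two (c : Fin 2 → ℤ) (x : Fin 2 → ℝ) : rdot c x = c 0 * x 0 + c 1 * x 1 := by
  simp [rdot, Fin.sum_univ_two]

lemma rdot_smul_add (k : ℤ) (c d : Fin 2 → ℤ) (x : Fin 2 → ℝ) :
    rdot (k • c + d) x = k * rdot c x + rdot d x := by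
  simp only [rdot_two, Pi.add_apply, Pi.smul_apply, smul_eq_mul]; push_cast; ring

lemma rdot_xbar (c : Fin 2 → ℤ) : rdot c x̄ = -riseA c / 2 := by
  simp [rdot_two, riseA]; ring

lemma rdot_origin (c : Fin 2 → ℤ) : rdot c ![0, 0] = rdot c x̄ + riseA c / 2 := by
  simp [rdot_two, riseA]; ring

lemma rdot_e1 (c : Fin 2 → ℤ) : rdot c ![1, 0] = rdot c x̄ + riseB c / 2 := by
  simp [rdot_two, riseB]; ring

lemma rdot_third_origin (c : Fin 2 → ℤ) : rdot c ![1/3, -2/3] = rdot c x̄ + riseA c / 6 := by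
  simp [rdot_two, riseA]; ring

lemma rdot_third_e1 (c : Fin 2 → ℤ) : rdot c ![2/3, -2/3] = rdot c x̄ + riseB c / 6 := by
  simp [rdot_two, riseB]; ring

lemma exists_int_rdot_xbar_iff (c : Fin 2 → ℤ) : (∃ z : ℤ, rdot c x̄ = z) ↔ Even (riseA c) := by
  simp only [rdot_xbar]
  constructor
  · rintro ⟨z, hz⟩
    refine ⟨-z, ?_⟩
    exact_mod_cast (show (riseA c : ℝ) = -z + -z by linarith)
  · rintro ⟨m, hm⟩
    exact ⟨-m, by rw [hm]; push_cast; ring⟩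

lemma two_mul_ceil_rdot_xbar {c : Fin 2 → ℤ} (h : Odd (riseA c)) :
    2 * ⌈rdot c x̄⌉ = 1 - riseA c := by
  obtain ⟨m, hm⟩ := h
  have : rdot c x̄ = (-(m + 1) : ℤ) + 1 / 2 := by rw [rdot_xbar, hm]; push_cast; ring
  rw [this, Int.ceil_intCast_add]
  norm_num
  omega

lemma ceil_rdot_xbar {c : Fin 2 → ℤ} (h : Odd (riseA c)) :
    (⌈rdot c x̄⌉ : ℝ) = rdot c x̄ + 1 / 2 := by
  have h2 : (2 * ⌈rdot c x̄⌉ : ℝ) = 1 - riseA c := by exact_mod_cast two_mul_ceil_rdot_xbar h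
  linarith [rdot_xbar c]

lemma le_of_mem_triangle {α β γ : ℝ} (h₀ : γ ≤ 0) (h₁ : γ ≤ α) (h₂ : γ ≤ α / 2 - β)
    {x : Fin 2 → ℝ} (hx : x ∈ triangle) : γ ≤ α * x 0 + β * x 1 := by
  have hlin : IsLinearMap ℝ fun y : Fin 2 → ℝ => α * y 0 + β * y 1 :=
    ⟨fun y z => by simp only [Pi.add_apply]; ring,
     fun r y => by simp only [Pi.smul_apply, smul_eq_mul]; ring⟩
  refine convexHull_min ?_ (convex_halfSpace_ge hlin γ) hx
  rintro y (rfl | rfl | rfl) <;> simp <;> linarith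

lemma origin_mem_triangle : ![0, 0] ∈ triangle := subset_convexHull ℝ _ (by simp)

lemma e1_mem_triangle : ![1, 0] ∈ triangle := subset_convexHull ℝ _ (by simp)

lemma xbar_mem_triangle : x̄ ∈ triangle := subset_convexHull ℝ _ (by simp)

lemma third_origin_mem_triangle : ![1/3, -2/3] ∈ triangle := by
  refine segment_subset_convexHull (by simp) (by simp) ⟨2/3, 1/3, ?_⟩ (x := x̄) (y := ![0, 0])
  refine ⟨by norm_num, by norm_num, by norm_num, ?_⟩
  ext i; fin_cases i <;> simp <;> norm_num

lemma third_e1_mem_triangle : ![2/3, -2/3] ∈ triangle := by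
  refine segment_subset_convexHull (by simp) (by simp) ⟨2/3, 1/3, ?_⟩ (x := x̄) (y := ![1, 0])
  refine ⟨by norm_num, by norm_num, by norm_num, ?_⟩
  ext i; fin_cases i <;> simp <;> norm_num

lemma ceil_sInf_rdot_triangle (c : Fin 2 → ℤ) :
    ⌈sInf ((fun x => rdot c x) '' triangle)⌉ = min (min 0 (c 0)) ⌈rdot c x̄⌉ := by
  set m : ℝ := min (min 0 (c 0 : ℝ)) (rdot c x̄)
  have hlow : ∀ y ∈ (fun x => rdot c x) '' triangle, m ≤ y := by
    rintro y ⟨x, hx, rfl⟩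
    simp only [rdot_two]
    refine le_of_mem_triangle (min_le_left _ _ |>.trans (min_le_left _ _))
      (min_le_left _ _ |>.trans (min_le_right _ _)) ?_ hx
    have hxbar : rdot c x̄ = c 0 / 2 - c 1 := by simp [rdot_two]; ring
    exact (min_le_right _ _).trans hxbar.le
  have hbdd : BddBelow ((fun x => rdot c x) '' triangle) := ⟨m, hlow⟩
  have hsInf : sInf ((fun x => rdot c x) '' triangle) = m := by
    refine le_antisymm (le_min (le_min ?_ ?_) ?_) (le_csInf ⟨_, _, xbar_mem_triangle, rfl⟩ hlow)
    · exact csInf_le hbdd ⟨_, origin_mem_triangle, by simp [rdot_two]⟩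
    · exact csInf_le hbdd ⟨_, e1_mem_triangle, by simp [rdot_two]⟩
    · exact csInf_le hbdd ⟨_, xbar_mem_triangle, rfl⟩
  rw [hsInf, Int.ceil_mono.map_min, Int.ceil_mono.map_min]
  simp

lemma lexLeC.rdot_le {C : Matrix (Fin 2) (Fin 2) ℤ} {x y : Fin 2 → ℝ} (h : lexLeC C x y)
    (hne : x ≠ y) :
    rdot (C 0) x ≤ rdot (C 0) y ∧ (rdot (C 0) x = rdot (C 0) y → rdot (C 1) x < rdot (C 1) y) := by
  rcases h with ⟨i, hlt, hpre⟩ | rfl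
  · fin_cases i
    · exact ⟨hlt.le, fun he => absurd he hlt.ne⟩
    · exact ⟨(hpre 0 (by decide)).le, fun _ => hlt⟩
  · exact absurd rfl hne

lemma rise_of_isLexMin {C : Matrix (Fin 2) (Fin 2) ℤ} (hmin : ∀ x ∈ triangle, lexLeC C x̄ x) :
    (0 ≤ riseA (C 0) ∧ (riseA (C 0) = 0 → 0 < riseA (C 1))) ∧
      (0 ≤ riseB (C 0) ∧ (riseB (C 0) = 0 → 0 < riseB (C 1))) := by
  have ha := (hmin _ origin_mem_triangle).rdot_le (by simp [funext_iff])
  have hb := (hmin _ e1_mem_triangle).rdot_le (by simp [funext_iff])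
  simp only [rdot_origin, rdot_e1, le_add_iff_nonneg_right, lt_add_iff_pos_right,
    left_eq_add, div_eq_zero_iff, OfNat.ofNat_ne_zero, or_false] at ha hb
  have of_real : ∀ r s : ℤ, (0 ≤ (r : ℝ) / 2 ∧ ((r : ℝ) = 0 → 0 < (s : ℝ) / 2)) →
      0 ≤ r ∧ (r = 0 → 0 < s) := fun r s ⟨h₀, h₁⟩ =>
    ⟨by exact_mod_cast (by linarith : (0 : ℝ) ≤ r),
     fun hr => by exact_mod_cast (by linarith [h₁ (by exact_mod_cast hr)] : (0 : ℝ) < s)⟩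
  exact ⟨of_real _ _ ha, of_real _ _ hb⟩

lemma exists_mem_triangle_ceil_le {g : Fin 2 → ℤ} (hodd : Odd (riseA g)) (hA : 1 ≤ riseA g)
    (hB : 1 ≤ riseB g) : ∃ x ∈ triangle, x 1 < 0 ∧ (⌈rdot g x̄⌉ : ℝ) ≤ rdot g x := by
  have hsum := riseA_add_riseB g
  have h3 : 3 ≤ riseA g ∨ 3 ≤ riseB g := by obtain ⟨k, hk⟩ := hodd; omega
  rw [ceil_rdot_xbar hodd]
  rcases h3 with h3 | h3
  · refine ⟨_, third_origin_mem_triangle, by norm_num, ?_⟩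
    have : (3 : ℝ) ≤ riseA g := by exact_mod_cast h3
    rw [rdot_third_origin]; linarith
  · refine ⟨_, third_e1_mem_triangle, by norm_num, ?_⟩
    have : (3 : ℝ) ≤ riseB g := by exact_mod_cast h3
    rw [rdot_third_e1]; linarith

lemma exists_lexCut_first {C : Matrix (Fin 2) (Fin 2) ℤ} (hmin : ∀ x ∈ triangle, lexLeC C x̄ x)
    (hfrac : ¬ ∃ z : ℤ, rdot (C 0) x̄ = z) :
    ∃ x ∈ triangle, x 1 < 0 ∧ (⌈rdot (C 0) x̄⌉ : ℝ) ≤ rdot (C 0) x := by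
  have hodd : Odd (riseA (C 0)) := by
    rwa [exists_int_rdot_xbar_iff, Int.not_even_iff_odd] at hfrac
  obtain ⟨⟨hA, -⟩, ⟨hB, -⟩⟩ := rise_of_isLexMin hmin
  have hsum := riseA_add_riseB (C 0)
  obtain ⟨k, hk⟩ := hodd
  exact exists_mem_triangle_ceil_le ⟨k, hk⟩ (by omega) (by omega)

lemma one_le_mul_add_of_lex {a b α : ℤ} (ha : 0 ≤ a) (hev : Even a) (hlex : a = 0 → 0 < b)
    (hα : 0 ≤ α) (hb : 1 ≤ 2 * α + b) : 1 ≤ α * a + b := by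
  rcases ha.eq_or_lt with rfl | ha
  · have := hlex rfl
    omega
  · obtain ⟨k, rfl⟩ := hev
    nlinarith [mul_le_mul_of_nonneg_left (show 1 ≤ k by omega) hα]

lemma exists_lexCut_second {C : Matrix (Fin 2) (Fin 2) ℤ}
    (hmin : ∀ x ∈ triangle, lexLeC C x̄ x) (ℓ₂ : ℤ)
    (hℓ₂ : ℓ₂ = ⌈sInf ((fun x => rdot (C 1) x) '' triangle)⌉)
    (hint : ∃ z : ℤ, rdot (C 0) x̄ = z) (hfrac : ¬ ∃ z : ℤ, rdot (C 1) x̄ = z) :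
    ∃ x ∈ triangle, x 1 < 0 ∧
      (⌈rdot (C 1) x̄ - (ℓ₂ : ℝ)⌉ : ℝ) * (rdot (C 0) x - rdot (C 0) x̄)
        + rdot (C 1) x ≥ (⌈rdot (C 1) x̄⌉ : ℝ) := by
  rw [exists_int_rdot_xbar_iff] at hint
  have hodd : Odd (riseA (C 1)) := by
    rwa [exists_int_rdot_xbar_iff, Int.not_even_iff_odd] at hfrac
  set α := ⌈rdot (C 1) x̄⌉ - ℓ₂ with hα
  -- `ℓ₂` is the least rounded-up vertex value, so `α = max 0 (max ⌈c²·x̄⌉ (⌈c²·x̄⌉ - c² 0))`.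
  have hbounds : 0 ≤ α ∧ 1 ≤ 2 * α + riseA (C 1) ∧ 1 ≤ 2 * α + riseB (C 1) := by
    have := two_mul_ceil_rdot_xbar hodd
    rw [ceil_sInf_rdot_triangle] at hℓ₂
    simp only [riseA, riseB] at this ⊢
    omega
  have hevB : Even (riseB (C 0)) := by
    obtain ⟨k, hk⟩ := hint; exact ⟨2 * C 0 1 - k, by linarith [riseA_add_riseB (C 0)]⟩
  have hoddg : Odd (riseA (α • C 0 + C 1)) := by
    rw [riseA_smul_add]; exact (hint.mul_left α).add_odd hodd
  obtain ⟨⟨hA0, hA1⟩, ⟨hB0, hB1⟩⟩ := rise_of_isLexMin hmin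
  obtain ⟨x, hx, hx1, hcut⟩ := exists_mem_triangle_ceil_le hoddg
    (by rw [riseA_smul_add]; exact one_le_mul_add_of_lex hA0 hint hA1 hbounds.1 hbounds.2.1)
    (by rw [riseB_smul_add]; exact one_le_mul_add_of_lex hB0 hevB hB1 hbounds.1 hbounds.2.2)
  refine ⟨x, hx, hx1, ?_⟩
  rw [ceil_rdot_xbar hoddg, rdot_smul_add, rdot_smul_add] at hcut
  rw [Int.ceil_sub_intCast, ← hα, ceil_rdot_xbar hodd]
  linarith

/-- Let `T ⊆ ℝ²` be the triangle `conv {(0,0), (1,0), (1/2,-1)}`. Then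
(a) `x₂ ≥ 0` is a split cut for `T` (valid on `{x ∈ T : x₁ ≤ 0}` and `{x ∈ T : x₁ ≥ 1}`);
(b) for every lattice basis `{c¹, c²}` of `ℤ²` (rows of a unimodular `C`) for which
`x̄ = (1/2,-1)` is the lex-min point of `T`, with `ℓ₂ = ⌈min {c²·x : x ∈ T}⌉` and `k`
the smallest index with `cᵏ·x̄ ∉ ℤ`, some point of `T` with `x₂ < 0` satisfies the
generated lex-cut (`c¹·x ≥ ⌈c¹·x̄⌉` if `k = 1`;
`⌈c²·x̄ - ℓ₂⌉·(c¹·x - c¹·x̄) + c²·x ≥ ⌈c²·x̄⌉` if `k = 2`), so the split cut `x₂ ≥ 0`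
is not implied by the lex-cut on `T`. -/
theorem stmt14 (T : Set (Fin 2 → ℝ))
    (hT : T = convexHull ℝ {![(0:ℝ), 0], ![(1:ℝ), 0], ![(1:ℝ)/2, -1]}) :
    ((∀ x ∈ T, x 0 ≤ 0 → 0 ≤ x 1) ∧ (∀ x ∈ T, 1 ≤ x 0 → 0 ≤ x 1)) ∧
    (∀ C : Matrix (Fin 2) (Fin 2) ℤ, (C.det = 1 ∨ C.det = -1) →
      ∀ xb : Fin 2 → ℝ, xb = ![(1:ℝ)/2, -1] → xb ∈ T → (∀ x ∈ T, lexLeC C xb x) →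
      ∀ ℓ₂ : ℤ, ℓ₂ = ⌈sInf ((fun x => rdot (C 1) x) '' T)⌉ →
      ((¬ ∃ z : ℤ, rdot (C 0) xb = (z : ℝ)) →
        ∃ x ∈ T, x 1 < 0 ∧ (⌈rdot (C 0) xb⌉ : ℝ) ≤ rdot (C 0) x) ∧
      (((∃ z : ℤ, rdot (C 0) xb = (z : ℝ)) ∧ (¬ ∃ z : ℤ, rdot (C 1) xb = (z : ℝ))) →
        ∃ x ∈ T, x 1 < 0 ∧
          (⌈rdot (C 1) xb - (ℓ₂ : ℝ)⌉ : ℝ) * (rdot (C 0) x - rdot (C 0) xb)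
            + rdot (C 1) x ≥ (⌈rdot (C 1) xb⌉ : ℝ))) := by
  obtain rfl : T = triangle := hT
  refine ⟨⟨fun x hx h0 => ?_, fun x hx h1 => ?_⟩, ?_⟩
  · linarith [le_of_mem_triangle (α := 2) (β := 1) (γ := 0) le_rfl (by norm_num) (by norm_num) hx]
  · linarith [le_of_mem_triangle (α := -2) (β := 1) (γ := -2) (by norm_num) le_rfl (by norm_num) hx]
  · rintro C - xb rfl - hmin ℓ₂ hℓ₂
    exact ⟨exists_lexCut_first hmin, fun ⟨hint, hfrac⟩ =>
      exists_lexCut_second hmin ℓ₂ hℓ₂ hint hfrac⟩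
end
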